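/- arXiv:2009.09616 — 2 statements merged into one kernel-verified Lean document; each statement's English description precedes it below -/
import Mathlib

section
/- Let S be a powerful set over a finite set E and let e ∈ E. Then e is a coloop of S if and only if r_S(E) = r_S(E∖{e}) + 1. -/
/-- A family `S` of subsets of a finite set `E` is *powerful* if every member of `S`
is a subset of `E` and, for every `X ⊆ E`, the number of members of `S` that are
subsets of `X` is a power of 2. -/
def Powerful {α : Type*} [DecidableEq α] (E : Finset α) (S : Finset (Finset α)) : Prop :=
  (∀ Y ∈ S, Y ⊆ E) ∧ ∀ X ⊆ E, ∃ k : ℕ, (S.filter (fun Y => Y ⊆ X)).card = 2 ^ k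

/-- An element `e` of `E` is a *coloop* of `S` if there is a family `T` of subsets of
`E∖{e}` with `S = {X : X ∈ T} ∪ {X ∪ {e} : X ∈ T}`. -/
def IsColoop {α : Type*} [DecidableEq α] (E : Finset α) (S : Finset (Finset α)) (e : α) : Prop :=
  ∃ T : Finset (Finset α), (∀ Y ∈ T, Y ⊆ E.erase e) ∧ S = T ∪ T.image (insert e)

/-!
Every member of `S` lies in `E`, so only `∅` is disjoint from `E`, while the members disjoint
from `E ∖ {e}` are `∅` and possibly `{e}`. Hence the rank drops by one exactly when `{e} ∈ S`.
If `{e} ∈ S`, then `S` is closed under toggling `e`, by a parity count of the members below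
`insert e W` with strong induction on `W ⊆ E ∖ {e}`; closure under toggling is what being a
coloop means.
-/

open Finset

lemma Nat.even_ite_add_ite_iff {p q : Prop} [Decidable p] [Decidable q] :
    Even ((if p then 1 else 0) + (if q then 1 else 0) : ℕ) ↔ (p ↔ q) := by
  by_cases p <;> by_cases q <;> simp_all

lemma Finset.card_filter_subset_eq_sum_powerset {α : Type*} [DecidableEq α]
    (S : Finset (Finset α)) (X : Finset α) :
    #(S.filter (· ⊆ X)) = ∑ Y ∈ X.powerset, if Y ∈ S then 1 else 0 := by
  rw [← card_filter]
  congr 1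
  ext Y
  simp [and_comm]

namespace Powerful

variable {α : Type*} [DecidableEq α] {E : Finset α} {S : Finset (Finset α)}

lemma empty_mem (hS : Powerful E S) : ∅ ∈ S := by
  obtain ⟨k, hk⟩ := hS.2 ∅ (empty_subset E)
  obtain ⟨Y, hY⟩ := card_pos.mp (hk ▸ Nat.two_pow_pos k)
  rw [mem_filter, subset_empty] at hY
  exact hY.2 ▸ hY.1

lemma filter_disjoint_eq_filter_subset_sdiff (hS : Powerful E S) (X : Finset α) :
    S.filter (fun Y => Y ∩ X = ∅) = S.filter (· ⊆ E \ X) := by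
  refine filter_congr fun Y hY => ?_
  rw [← disjoint_iff_inter_eq_empty, subset_sdiff]
  exact (and_iff_right (hS.1 Y hY)).symm

lemma card_filter_subset_empty (hS : Powerful E S) : #(S.filter (· ⊆ ∅)) = 1 := by
  rw [card_filter_subset_eq_sum_powerset]
  simp [hS.empty_mem]

lemma card_filter_subset_singleton (hS : Powerful E S) (e : α) :
    #(S.filter (· ⊆ {e})) = if {e} ∈ S then 2 else 1 := by
  rw [card_filter_subset_eq_sum_powerset, ← insert_empty, sum_powerset_insert (notMem_empty e)]
  simp only [powerset_empty, sum_singleton, insert_empty, if_pos hS.empty_mem]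
  split_ifs with h <;> simp [h]

lemma even_card_filter_subset (hS : Powerful E S) {X : Finset α} (hX : X ⊆ E)
    (h : 1 < #(S.filter (· ⊆ X))) : Even #(S.filter (· ⊆ X)) := by
  obtain ⟨k, hk⟩ := hS.2 X hX
  rw [hk] at h ⊢
  exact Nat.even_pow.mpr ⟨even_two, by rintro rfl; simp at h⟩

/-- The members below `insert e W` include `∅` and `{e}`, so their number is an even power of two.
By induction every `Z ⊂ W` contributes `0` or `2` to it (from `Z` and `insert e Z`), hence so
does `W`. -/
lemma insert_mem_iff_of_singleton_mem (hS : Powerful E S) {e : α} (he : e ∈ E)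
    (hse : {e} ∈ S) {W : Finset α} (hW : W ⊆ E.erase e) : insert e W ∈ S ↔ W ∈ S := by
  induction W using Finset.strongInduction with
  | H W ih =>
  set d : Finset α → ℕ := fun Z => (if Z ∈ S then 1 else 0) + if insert e Z ∈ S then 1 else 0
  have heW : e ∉ W := fun h => notMem_erase e E (hW h)
  have hsum : #(S.filter (· ⊆ insert e W)) = ∑ Z ∈ W.powerset, d Z := by
    rw [card_filter_subset_eq_sum_powerset, sum_powerset_insert heW, ← sum_add_distrib]
  have hcount : Even (∑ Z ∈ W.powerset, d Z) := by
    rw [← hsum]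
    refine hS.even_card_filter_subset (insert_subset he (hW.trans (erase_subset e E))) ?_
    refine one_lt_card.mpr ⟨∅, ?_, {e}, ?_, (singleton_ne_empty e).symm⟩ <;>
      simp [hS.empty_mem, hse]
  have hrest : Even (∑ Z ∈ W.powerset.erase W, d Z) := by
    refine even_sum _ fun Z hZ => Nat.even_ite_add_ite_iff.mpr ?_
    have hZW : Z ⊂ W :=
      Finset.ssubset_iff_subset_ne.mpr ⟨mem_powerset.mp (mem_of_mem_erase hZ), ne_of_mem_erase hZ⟩
    exact (ih Z hZW (hZW.subset.trans hW)).symm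
  rw [← add_sum_erase _ _ (mem_powerset_self W), Nat.even_add] at hcount
  exact (Nat.even_ite_add_ite_iff.mp (hcount.mpr hrest)).symm

lemma isColoop_iff_singleton_mem (hS : Powerful E S) {e : α} (he : e ∈ E) :
    IsColoop E S e ↔ {e} ∈ S := by
  constructor
  · rintro ⟨T, -, rfl⟩
    have hT : ∅ ∈ T := (mem_union.mp hS.empty_mem).resolve_right fun h =>
      let ⟨Z, _, hZ⟩ := mem_image.mp h
      insert_ne_empty e Z hZ
    exact mem_union_right _ (mem_image.mpr ⟨∅, hT, rfl⟩)
  · intro hse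
    have hsub : ∀ {Y}, Y ∈ S → e ∉ Y → Y ⊆ E.erase e := fun hY heY =>
      subset_erase.mpr ⟨hS.1 _ hY, heY⟩
    refine ⟨S.filter (e ∉ ·), fun Y hY => hsub (mem_filter.mp hY).1 (mem_filter.mp hY).2, ?_⟩
    ext Y
    simp only [mem_union, mem_filter, mem_image]
    constructor
    · intro hY
      by_cases heY : e ∈ Y
      · refine Or.inr ⟨Y.erase e, ⟨?_, notMem_erase e Y⟩, insert_erase heY⟩
        rw [← hS.insert_mem_iff_of_singleton_mem he hse (erase_subset_erase e (hS.1 Y hY)),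
          insert_erase heY]
        exact hY
      · exact Or.inl ⟨hY, heY⟩
    · rintro (⟨hY, -⟩ | ⟨Z, ⟨hZ, heZ⟩, rfl⟩)
      · exact hY
      · exact (hS.insert_mem_iff_of_singleton_mem he hse (hsub hZ heZ)).mpr hZ

end Powerful

/-- For a powerful set `S` over `E` and `e ∈ E`, the element `e` is a coloop of `S`
iff `r_S(E) = r_S(E∖{e}) + 1`, where `r_S(X)` is the unique `k` with
`|{Y ∈ S : Y ∩ X = ∅}| · 2^k = |S|`. -/
theorem isColoop_iff_rank_drop {α : Type*} [DecidableEq α]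
    (E : Finset α) (S : Finset (Finset α)) (hS : Powerful E S) (e : α) (he : e ∈ E)
    (kE : ℕ) (hkE : (S.filter (fun Y => Y ∩ E = ∅)).card * 2 ^ kE = S.card)
    (kE' : ℕ)
    (hkE' : (S.filter (fun Y => Y ∩ (E.erase e) = ∅)).card * 2 ^ kE' = S.card) :
    IsColoop E S e ↔ kE = kE' + 1 := by
  rw [hS.filter_disjoint_eq_filter_subset_sdiff, Finset.sdiff_self,
    hS.card_filter_subset_empty, one_mul] at hkE
  rw [hS.filter_disjoint_eq_filter_subset_sdiff, Finset.sdiff_erase_self he,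
    hS.card_filter_subset_singleton] at hkE'
  rw [hS.isColoop_iff_singleton_mem he]
  split_ifs at hkE' with hse
  · refine iff_of_true hse ((Nat.pow_right_inj one_lt_two).mp ?_)
    rw [hkE, ← hkE', pow_succ, mul_comm]
  · have : kE = kE' := (Nat.pow_right_inj one_lt_two).mp (by rw [hkE, ← hkE', one_mul])
    exact iff_of_false hse (by omega)
end

section
/- Let S be a powerful set over a finite set E with |E| = n ≥ 1 and |S| = 2^{n−1} (i.e., S has order n and rank n−1). Then at most one element of E has rank different from 1: for any two distinct elements e, f ∈ E, r_S({e}) = 1 or r_S({f}) = 1. -/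
/-! Write `t = 2 ^ (|E| - 2)`, so `|S| = 2t`, and `A_x = {Y ∈ S | x ∉ Y}`, so
`|A_x| * 2 ^ r({x}) = 2t`. At most `2 ^ |E \ D|` members of `S` contain a given `D ⊆ E`, since
`Y ↦ Y \ D` is injective on them.

If `r({e}) = 0`, then `S` lies in the powerset of `E \ {e}` and has half its size, so exactly half
of `S` avoids `f` (at most `t` members avoid `f`, at most `t` contain it): `r({f}) = 1`.
If `r({e}), r({f}) ≥ 2`, then `|A_e|, |A_f| ≤ t / 2`; but `A_e ∪ A_f` is all of `S` except the
at most `t` members containing `{e, f}`, and `∅ ∈ A_e ∩ A_f`, so `2t ≤ |A_e| + |A_f| - 1 + t < 2t`. -/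

open Finset

section

variable {α : Type*} [DecidableEq α] {E : Finset α} {S : Finset (Finset α)}

theorem Powerful.empty_mem_s16 (hS : Powerful E S) : ∅ ∈ S := by
  obtain ⟨k, hk⟩ := hS.2 ∅ (empty_subset E)
  obtain ⟨Y, hY⟩ : {Y ∈ S | Y ⊆ ∅}.Nonempty := by
    rw [← card_pos, hk]
    positivity
  rw [mem_filter, subset_empty] at hY
  exact hY.2 ▸ hY.1

theorem card_filter_superset_le (hSE : ∀ Y ∈ S, Y ⊆ E) (D : Finset α) :
    #{Y ∈ S | D ⊆ Y} ≤ 2 ^ #(E \ D) := by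
  rw [← card_powerset]
  refine card_le_card_of_injOn (· \ D) (fun Y hY => ?_) (fun Y₁ hY₁ Y₂ hY₂ h => ?_)
  · exact mem_powerset.2 (sdiff_subset_sdiff (hSE Y (mem_filter.1 hY).1) subset_rfl)
  · rw [← sdiff_union_of_subset (mem_filter.1 hY₁).2, ← sdiff_union_of_subset (mem_filter.1 hY₂).2]
    exact congrArg (· ∪ D) h

theorem card_filter_notMem_eq_of_card_eq (hSE : ∀ Y ∈ S, Y ⊆ E) (hcard : #S = 2 ^ #E)
    {f : α} (hf : f ∈ E) : #{Y ∈ S | f ∉ Y} * 2 = #S := by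
  have hcard_erase : #(E.erase f) = #E - 1 := card_erase_of_mem hf
  have hpow : 2 ^ #E = 2 ^ (#E - 1) * 2 := by
    rw [← pow_succ, Nat.sub_add_cancel (card_pos.2 ⟨f, hf⟩)]
  have havoid : #{Y ∈ S | f ∉ Y} ≤ 2 ^ (#E - 1) := by
    rw [← hcard_erase, ← card_powerset]
    refine card_le_card fun Y hY => ?_
    rw [mem_filter] at hY
    exact mem_powerset.2 (subset_erase.2 ⟨hSE Y hY.1, hY.2⟩)
  have hcontain : #{Y ∈ S | {f} ⊆ Y} ≤ 2 ^ (#E - 1) := by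
    simpa only [sdiff_singleton_eq_erase, hcard_erase] using card_filter_superset_le hSE {f}
  have hsplit := card_filter_add_card_filter_not (s := S) (p := fun Y => {f} ⊆ Y)
  simp only [singleton_subset_iff] at hcontain hsplit
  omega

theorem rank_singleton_eq_one_of_rank_singleton_eq_zero (hSE : ∀ Y ∈ S, Y ⊆ E)
    (hcard : #S = 2 ^ (#E - 1)) {e f : α} (hef : e ≠ f) (he : e ∈ E) (hf : f ∈ E)
    (he_avoid : #{Y ∈ S | e ∉ Y} = #S) {k : ℕ} (hk : #{Y ∈ S | f ∉ Y} * 2 ^ k = #S) : k = 1 := by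
  have hSe : ∀ Y ∈ S, e ∉ Y :=
    filter_eq_self.1 (eq_of_subset_of_card_le (filter_subset _ _) he_avoid.ge)
  have hSE' : ∀ Y ∈ S, Y ⊆ E.erase e := fun Y hY => subset_erase.2 ⟨hSE Y hY, hSe Y hY⟩
  have hhalf := card_filter_notMem_eq_of_card_eq hSE' (by rw [card_erase_of_mem he, hcard])
    (mem_erase.2 ⟨hef.symm, hf⟩)
  have hpos : 0 < #{Y ∈ S | f ∉ Y} := by
    have : 0 < #S := by rw [hcard]; positivity
    omega
  exact Nat.pow_right_injective le_rfl (Nat.eq_of_mul_eq_mul_left hpos (hk.trans hhalf.symm))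

theorem card_add_one_le_card_filter_notMem_add (hS : Powerful E S) {e f : α} (hef : e ≠ f)
    (he : e ∈ E) (hf : f ∈ E) :
    #S + 1 ≤ #{Y ∈ S | e ∉ Y} + #{Y ∈ S | f ∉ Y} + 2 ^ (#E - 2) := by
  set A := {Y ∈ S | e ∉ Y}
  set B := {Y ∈ S | f ∉ Y}
  have hcover : S ⊆ (A ∪ B) ∪ {Y ∈ S | {e, f} ⊆ Y} := by
    intro Y hY
    simp only [A, B, mem_union, mem_filter, insert_subset_iff, singleton_subset_iff]
    tauto
  have hboth : #{Y ∈ S | {e, f} ⊆ Y} ≤ 2 ^ (#E - 2) := by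
    have hsub : {e, f} ⊆ E := insert_subset_iff.2 ⟨he, singleton_subset_iff.2 hf⟩
    simpa only [card_sdiff_of_subset hsub, card_pair hef] using card_filter_superset_le hS.1 {e, f}
  have hinter : 0 < #(A ∩ B) := card_pos.2 ⟨∅, by simp [A, B, hS.empty_mem_s16]⟩
  have hunion := card_union_add_card_inter A B
  have hle := (card_le_card hcover).trans (card_union_le _ _)
  omega

end

theorem at_most_one_rank_ne_one_general {α : Type*} [DecidableEq α]
    (E : Finset α) (S : Finset (Finset α)) (hS : Powerful E S)
    (n : ℕ) (hE : E.card = n) (hcard : S.card = 2 ^ (n - 1))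
    (e f : α) (he : e ∈ E) (hf : f ∈ E) (hef : e ≠ f)
    (ke kf : ℕ)
    (hke : (S.filter (fun Y => Y ∩ ({e} : Finset α) = ∅)).card * 2 ^ ke = S.card)
    (hkf : (S.filter (fun Y => Y ∩ ({f} : Finset α) = ∅)).card * 2 ^ kf = S.card) :
    ke = 1 ∨ kf = 1 := by
  subst hE
  have hfilter (x : α) : S.filter (fun Y => Y ∩ {x} = ∅) = {Y ∈ S | x ∉ Y} :=
    filter_congr fun Y _ => by rw [← disjoint_iff_inter_eq_empty, disjoint_singleton_right]
  rw [hfilter] at hke hkf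
  obtain rfl | rfl | hke2 : ke = 0 ∨ ke = 1 ∨ 2 ≤ ke := by omega
  · exact .inr (rank_singleton_eq_one_of_rank_singleton_eq_zero hS.1 hcard hef he hf
      (by simpa using hke) hkf)
  · exact .inl rfl
  obtain rfl | rfl | hkf2 : kf = 0 ∨ kf = 1 ∨ 2 ≤ kf := by omega
  · exact .inl (rank_singleton_eq_one_of_rank_singleton_eq_zero hS.1 hcard hef.symm hf he
      (by simpa using hkf) hke)
  · exact .inr rfl
  have hpow : 2 ^ (#E - 1) = 2 * 2 ^ (#E - 2) := by
    have := one_lt_card.2 ⟨e, he, f, hf, hef⟩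
    rw [← pow_succ']
    congr 1
    omega
  have hquarter_e : #{Y ∈ S | e ∉ Y} * 2 ^ 2 ≤ #S :=
    hke ▸ Nat.mul_le_mul_left _ (Nat.pow_le_pow_right two_pos hke2)
  have hquarter_f : #{Y ∈ S | f ∉ Y} * 2 ^ 2 ≤ #S :=
    hkf ▸ Nat.mul_le_mul_left _ (Nat.pow_le_pow_right two_pos hkf2)
  have := card_add_one_le_card_filter_notMem_add hS hef he hf
  omega

/-- In a powerful set of order `n` and rank `n−1`, at most one element has rank
different from 1: for any two distinct elements `e`, `f`, either `r_S({e}) = 1` or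
`r_S({f}) = 1`, where `r_S({x})` is the unique `k` with
`|{Y ∈ S : Y ∩ {x} = ∅}| · 2^k = |S|`. -/
theorem at_most_one_rank_ne_one {α : Type*} [DecidableEq α]
    (E : Finset α) (S : Finset (Finset α)) (hS : Powerful E S)
    (n : ℕ) (hn : 1 ≤ n) (hE : E.card = n) (hcard : S.card = 2 ^ (n - 1))
    (e f : α) (he : e ∈ E) (hf : f ∈ E) (hef : e ≠ f)
    (ke kf : ℕ)
    (hke : (S.filter (fun Y => Y ∩ ({e} : Finset α) = ∅)).card * 2 ^ ke = S.card)
    (hkf : (S.filter (fun Y => Y ∩ ({f} : Finset α) = ∅)).card * 2 ^ kf = S.card) :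
    ke = 1 ∨ kf = 1 :=
  at_most_one_rank_ne_one_general E S hS n hE hcard e f he hf hef ke kf hke hkf
end
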